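/- Let m be a positive even integer and let A, B ⊆ Z_m with A ∪ B = Z_m and |A ∩ B| = m - 2. Then R_A(n) = R_B(n) for all n ∈ Z_m if and only if B = A + m/2. -/

import Mathlib

/-!
The sum of `R_A` over `ℤ/m` is `|A|²`, so equal representation functions force `|A| = |B|`, and the
cardinality hypotheses then give `A = {b}ᶜ`, `B = {a}ᶜ` with `a ≠ b`. For the complement of a
point, `R_{{b}ᶜ}(n)` is `m - 1` at `n = 2b` and `m - 2` elsewhere, so `2a = 2b`; hence `a - b` is
the unique nonzero element of order two, `m / 2`. Conversely, translating `A` by `c` translates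
`R_A` by `2c`, which is `0` for `c = m / 2`.
-/

open Finset

/-- Representation function: number of ordered pairs (a, a') in A × A with a + a' = n. -/
def repFn {m : ℕ} (A : Finset (ZMod m)) (n : ZMod m) : ℕ :=
  ((A ×ˢ A).filter (fun p => p.1 + p.2 = n)).card

lemma Finset.exists_eq_compl_singleton_of_card_add_one_eq {α : Type*} [Fintype α] [DecidableEq α]
    {s : Finset α} (hs : #s + 1 = Fintype.card α) : ∃ a, s = {a}ᶜ := by
  obtain ⟨a, ha⟩ := card_eq_one.mp (by rw [card_compl]; omega : #sᶜ = 1)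
  exact ⟨a, by rw [← ha, compl_compl]⟩

lemma Finset.image_add_right_compl_singleton {α : Type*} [AddGroup α] [Fintype α] [DecidableEq α]
    (b c : α) : ({b}ᶜ : Finset α).image (· + c) = {b + c}ᶜ := by
  ext y
  simp

lemma ZMod.eq_half_of_add_self_eq_zero {m : ℕ} [NeZero m] {x : ZMod m} (hx : x + x = 0)
    (hx0 : x ≠ 0) : x = ((m / 2 : ℕ) : ZMod m) := by
  have hval : 2 * x.val = m :=
    ((ZMod.neg_eq_self_iff x).mp (neg_eq_of_add_eq_zero_left hx)).resolve_left hx0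
  rw [← ZMod.natCast_zmod_val x]
  congr 1
  omega

section repFn

variable {m : ℕ}

lemma repFn_eq_card_filter (A : Finset (ZMod m)) (n : ZMod m) :
    repFn A n = #(A.filter (fun x => n - x ∈ A)) := by
  refine card_nbij' Prod.fst (fun x => (x, n - x)) ?_ ?_ ?_ ?_
  · rintro ⟨x, y⟩
    simp only [coe_filter, mem_product, Set.mem_ofPred_eq]
    rintro ⟨⟨hx, hy⟩, rfl⟩
    simpa using And.intro hx hy
  · intro x
    simp only [coe_filter, mem_product, Set.mem_ofPred_eq, add_sub_cancel, and_true]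
    exact id
  · rintro ⟨x, y⟩
    simp only [coe_filter, mem_product, Set.mem_ofPred_eq, Prod.mk.injEq, true_and]
    rintro ⟨-, rfl⟩
    exact add_sub_cancel_left x y
  · intro x _
    rfl

lemma repFn_image_add_right (A : Finset (ZMod m)) (c n : ZMod m) :
    repFn (A.image (· + c)) (n + c + c) = repFn A n := by
  refine (card_nbij' (fun p => (p.1 + c, p.2 + c)) (fun p => (p.1 - c, p.2 - c))
    ?_ ?_ ?_ ?_).symm
  all_goals intro p
  · simp only [coe_filter, mem_product, Set.mem_ofPred_eq, image_add_right, mem_preimage]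
    grind
  · simp only [coe_filter, mem_product, Set.mem_ofPred_eq, image_add_right, mem_preimage]
    grind
  · simp
  · simp

variable [NeZero m]

lemma sum_repFn (A : Finset (ZMod m)) : ∑ n, repFn A n = #A * #A := by
  rw [← card_product]
  exact (card_eq_sum_card_fiberwise (t := univ) fun p _ => mem_univ (p.1 + p.2)).symm

lemma card_eq_of_repFn_eq {A B : Finset (ZMod m)} (h : ∀ n, repFn A n = repFn B n) :
    #A = #B := by
  have hsq : #A * #A = #B * #B := by
    rw [← sum_repFn, ← sum_repFn]
    exact sum_congr rfl fun n _ => h n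
  exact Nat.mul_self_inj.mp hsq

lemma repFn_compl_singleton (b n : ZMod m) :
    repFn ({b}ᶜ : Finset (ZMod m)) n = if n = b + b then m - 1 else m - 2 := by
  have hfilter : ({b}ᶜ : Finset (ZMod m)).filter (fun x => n - x ∈ ({b}ᶜ : Finset (ZMod m)))
      = {b, n - b}ᶜ := by
    ext x
    simp only [mem_filter, mem_compl, mem_singleton, mem_insert, not_or, sub_eq_iff_eq_add]
    grind
  rw [repFn_eq_card_filter, hfilter, card_compl, ZMod.card]
  split_ifs with hn
  · rw [hn, add_sub_cancel_right, pair_eq_singleton, card_singleton]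
  · rw [card_pair fun h => hn (sub_eq_iff_eq_add.mp h.symm)]

lemma add_self_eq_of_repFn_compl_singleton_eq (hm : 2 ≤ m) {a b : ZMod m}
    (h : repFn ({b}ᶜ : Finset (ZMod m)) (a + a) = repFn {a}ᶜ (a + a)) : a + a = b + b := by
  rw [repFn_compl_singleton, repFn_compl_singleton, if_pos rfl] at h
  split_ifs at h with hab
  · exact hab
  · omega

end repFn

theorem stmt3 (m : ℕ) [NeZero m] (hm : Even m)
    (A B : Finset (ZMod m)) (hU : A ∪ B = Finset.univ) (hI : (A ∩ B).card = m - 2) :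
    (∀ n : ZMod m, repFn A n = repFn B n) ↔
      B = A.image (fun x => x + ((m / 2 : ℕ) : ZMod m)) := by
  have hm2 : 2 ≤ m := by obtain ⟨k, rfl⟩ := hm; have := NeZero.ne (k + k); omega
  set c : ZMod m := ((m / 2 : ℕ) : ZMod m)
  have hcc : c + c = 0 := by
    rw [← Nat.cast_add, ← two_mul, Nat.mul_div_cancel' hm.two_dvd, ZMod.natCast_self]
  constructor
  · intro h
    have hsum := card_union_add_card_inter A B
    rw [hU, hI, card_univ, ZMod.card, ← card_eq_of_repFn_eq h] at hsum
    obtain ⟨b, rfl⟩ := exists_eq_compl_singleton_of_card_add_one_eq (s := A)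
      (by rw [ZMod.card]; omega)
    obtain ⟨a, rfl⟩ := exists_eq_compl_singleton_of_card_add_one_eq (s := B)
      (by rw [← card_eq_of_repFn_eq h, ZMod.card]; omega)
    have hab : a - b ≠ 0 := by
      rintro hab
      simp [sub_eq_zero.mp hab] at hU
    have h2 : a + a = b + b := add_self_eq_of_repFn_compl_singleton_eq hm2 (h (a + a))
    have hhalf : a - b = c := ZMod.eq_half_of_add_self_eq_zero (by linear_combination h2) hab
    rw [image_add_right_compl_singleton, ← hhalf, add_sub_cancel]
  · rintro rfl n
    rw [← repFn_image_add_right A c n, add_assoc, hcc, add_zero]
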